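/- arXiv:1202.5013 — 2 statements merged into one kernel-verified Lean document; each statement's English description precedes it below -/
import Mathlib

section
/- Let r > 1 and let h be complex-analytic on the annulus A = {z ∈ ℂ : 1/r < |z| < r}, satisfying h(1/z) = −h(z) for all z ∈ A. Then there exists a function f, complex-analytic on the open ball {z : |z| < r}, with f(0) = 0, such that h(z) = f(z) − f(1/z) for all z ∈ A. -/
open Complex Metric Set Function Real

/-- Inversion change of variables in a circle integral around 0. -/
lemma circleIntegral_inv_subst (s : ℝ) (hs : 0 < s) (F : ℂ → ℂ) :
    (∮ w in C(0, s), F w) = ∮ u in C(0, s⁻¹), ((u ^ 2)⁻¹ * F u⁻¹) := by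
  have hkey : ∀ θ : ℝ,
      deriv (circleMap 0 s⁻¹) θ • ((circleMap 0 s⁻¹ θ ^ 2)⁻¹ * F (circleMap 0 s⁻¹ θ)⁻¹)
        = (fun w => w * I * F w) (circleMap 0 s (-θ)) := by
    intro θ
    have hne : circleMap 0 s⁻¹ θ ≠ 0 := circleMap_ne_center (by positivity)
    have hinv : (circleMap 0 s⁻¹ θ)⁻¹ = circleMap 0 s (-θ) := by
      simp only [circleMap, zero_add, mul_inv, ← Complex.exp_neg]
      push_cast
      rw [inv_inv]
      ring_nf
    rw [deriv_circleMap, smul_eq_mul]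
    have : circleMap 0 s⁻¹ θ * I * ((circleMap 0 s⁻¹ θ ^ 2)⁻¹ * F (circleMap 0 s⁻¹ θ)⁻¹)
        = (circleMap 0 s⁻¹ θ)⁻¹ * I * F (circleMap 0 s⁻¹ θ)⁻¹ := by
      field_simp
    rw [this, hinv]
  have hper : Periodic (fun θ : ℝ => (fun w => w * I * F w) (circleMap 0 s θ)) (2 * π) :=
    fun θ => by simp [(periodic_circleMap 0 s) θ]
  calc (∮ w in C(0, s), F w)
      = ∫ θ in (0:ℝ)..2 * π, (fun w => w * I * F w) (circleMap 0 s θ) := by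
        simp only [circleIntegral, deriv_circleMap, smul_eq_mul]
    _ = ∫ θ in (-(2*π):ℝ)..0, (fun w => w * I * F w) (circleMap 0 s θ) := by
        have := hper.intervalIntegral_add_eq (-(2*π)) 0
        simpa using this.symm
    _ = ∫ θ in (0:ℝ)..2 * π, (fun w => w * I * F w) (circleMap 0 s (-θ)) := by
        have := intervalIntegral.integral_comp_neg
          (f := fun θ : ℝ => (fun w => w * I * F w) (circleMap 0 s θ)) (a := (0:ℝ)) (b := 2*π)
        simp only [neg_zero] at this
        exact this.symm
    _ = ∮ u in C(0, s⁻¹), ((u ^ 2)⁻¹ * F u⁻¹) := by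
        simp only [circleIntegral]
        exact (intervalIntegral.integral_congr (fun θ _ => hkey θ)).symm

/-- Independence of the Cauchy transform from the radius. -/
lemma cauchy_radius_indep (r : ℝ) (hr : 1 < r) (h : ℂ → ℂ)
    (hA : AnalyticOnNhd ℂ h {z : ℂ | 1 / r < ‖z‖ ∧ ‖z‖ < r})
    {z : ℂ} {s s' : ℝ} (h1 : 1 < s) (hz : ‖z‖ < s) (hss' : s ≤ s') (hs'r : s' < r) :
    (∮ w in C(0, s'), (w - z)⁻¹ • h w) = ∮ w in C(0, s), (w - z)⁻¹ • h w := by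
  have hr0 : (0:ℝ) < r := lt_trans one_pos hr
  have hdiff : ∀ w ∈ closedBall (0:ℂ) s' \ ball 0 s,
      DifferentiableAt ℂ (fun w => (w - z)⁻¹ • h w) w := by
    intro w hw
    have hw1 : ‖w‖ ≤ s' := mem_closedBall_zero_iff.1 hw.1
    have hw2 : s ≤ ‖w‖ := le_of_not_gt (fun hlt => hw.2 (mem_ball_zero_iff.2 hlt))
    have hwA : w ∈ {z : ℂ | 1 / r < ‖z‖ ∧ ‖z‖ < r} :=
      ⟨lt_of_lt_of_le (lt_trans (by rw [one_div]; exact inv_lt_one_of_one_lt₀ hr)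
        (lt_of_lt_of_le h1 hw2)) le_rfl |>.trans_le le_rfl, lt_of_le_of_lt hw1 hs'r⟩
    have hwz : w ≠ z := by
      intro e; rw [e] at hw2; exact absurd (lt_of_lt_of_le hz hw2) (lt_irrefl _)
    exact ((differentiableAt_id.sub_const z).inv (sub_ne_zero.2 hwz)).smul
      (hA w hwA).differentiableAt
  exact Complex.circleIntegral_eq_of_differentiable_on_annulus_off_countable
    (lt_trans one_pos h1) hss' Set.countable_empty
    (fun w hw => (hdiff w hw).continuousAt.continuousWithinAt)
    (fun w hw => hdiff w ⟨ball_subset_closedBall hw.1.1,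
      fun hb => hw.1.2 (ball_subset_closedBall hb)⟩)

/-- The master formula: Cauchy integral formula on the annulus combined with inversion. -/
lemma master_formula (r : ℝ) (hr : 1 < r) (h : ℂ → ℂ)
    (hA : AnalyticOnNhd ℂ h {z : ℂ | 1 / r < ‖z‖ ∧ ‖z‖ < r})
    (hsym : ∀ z ∈ {z : ℂ | 1 / r < ‖z‖ ∧ ‖z‖ < r}, h z⁻¹ = -h z)
    {s : ℝ} (h1 : 1 < s) (hsr : s < r) {z : ℂ} (hz1 : s⁻¹ < ‖z‖) (hz2 : ‖z‖ < s) :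
    (∮ w in C(0, s), (w - z)⁻¹ • h w) - (∮ w in C(0, s), (w - z⁻¹)⁻¹ • h w)
      + (∮ w in C(0, s), w⁻¹ • h w) = (2 * π * I : ℂ) • h z := by
  have hs0 : (0:ℝ) < s := lt_trans one_pos h1
  have hsi0 : (0:ℝ) < s⁻¹ := inv_pos.2 hs0
  have hsi1 : s⁻¹ < 1 := inv_lt_one_of_one_lt₀ h1
  have hr0 : (0:ℝ) < r := lt_trans one_pos hr
  have hri : 1/r < s⁻¹ := by rw [one_div]; exact inv_strictAnti₀ hs0 hsr
  have hz0 : z ≠ 0 := by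
    intro e; rw [e, norm_zero] at hz1; exact absurd hz1 (not_lt.2 hsi0.le)
  have hzA : z ∈ {z : ℂ | 1 / r < ‖z‖ ∧ ‖z‖ < r} := ⟨lt_trans hri hz1, lt_trans hz2 hsr⟩
  have hsubA : closedBall (0:ℂ) s \ ball 0 s⁻¹ ⊆ {z : ℂ | 1 / r < ‖z‖ ∧ ‖z‖ < r} := by
    intro w hw
    have hw1 : ‖w‖ ≤ s := mem_closedBall_zero_iff.1 hw.1
    have hw2 : s⁻¹ ≤ ‖w‖ := le_of_not_gt (fun hlt => hw.2 (mem_ball_zero_iff.2 hlt))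
    exact ⟨lt_of_lt_of_le hri hw2, lt_of_le_of_lt hw1 hsr⟩
  have hsphA : ∀ w ∈ sphere (0:ℂ) s, w ∈ {z : ℂ | 1 / r < ‖z‖ ∧ ‖z‖ < r} := by
    intro w hw
    have : ‖w‖ = s := mem_sphere_zero_iff_norm.1 hw
    exact ⟨by rw [this]; exact lt_trans hri (lt_trans hsi1 h1), by rw [this]; exact hsr⟩
  -- Step A: Cauchy integral formula on the annulus via `dslope`.
  have hmem_nhds : (closedBall (0:ℂ) s \ ball 0 s⁻¹) ∈ nhds z := by
    have hopen : IsOpen (ball (0:ℂ) s \ closedBall 0 s⁻¹) := isOpen_ball.sdiff Metric.isClosed_closedBall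
    refine Filter.mem_of_superset (hopen.mem_nhds ⟨mem_ball_zero_iff.2 hz2, fun hc => ?_⟩)
      (diff_subset_diff ball_subset_closedBall ball_subset_closedBall)
    exact absurd (mem_closedBall_zero_iff.1 hc) (not_le.2 hz1)
  have hcF : ContinuousOn (dslope h z) (closedBall (0:ℂ) s \ ball 0 s⁻¹) :=
    (continuousOn_dslope hmem_nhds).2
      ⟨fun w hw => ((hA w (hsubA hw)).continuousAt).continuousWithinAt,
        (hA z hzA).differentiableAt⟩
  have hdF : ∀ w ∈ (ball (0:ℂ) s \ closedBall 0 s⁻¹) \ {z}, DifferentiableAt ℂ (dslope h z) w := by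
    intro w hw
    have hwz : w ≠ z := hw.2
    refine (differentiableAt_dslope_of_ne hwz).2 ?_
    exact (hA w (hsubA ⟨ball_subset_closedBall hw.1.1,
      fun hb => hw.1.2 (ball_subset_closedBall hb)⟩)).differentiableAt
  have HI : (∮ w in C(0, s), dslope h z w) = ∮ w in C(0, s⁻¹), dslope h z w :=
    Complex.circleIntegral_eq_of_differentiable_on_annulus_off_countable hsi0 (le_of_lt
      (lt_trans hsi1 h1)) (Set.countable_singleton z) hcF hdF
  -- evaluate the integral over the outer circle
  have hconth : ContinuousOn h (sphere (0:ℂ) s) := fun w hw =>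
    ((hA w (hsphA w hw)).continuousAt).continuousWithinAt
  have hnez_s : ∀ w ∈ sphere (0:ℂ) s, w - z ≠ 0 := by
    intro w hw
    have : ‖w‖ = s := mem_sphere_zero_iff_norm.1 hw
    refine sub_ne_zero.2 fun e => ?_
    rw [e] at this; rw [this] at hz2; exact absurd hz2 (lt_irrefl _)
  have ci1 : CircleIntegrable (fun w => (w - z)⁻¹ • h w) 0 s :=
    (((continuousOn_id.sub continuousOn_const).inv₀ hnez_s).smul hconth).circleIntegrable hs0.le
  have ci2 : CircleIntegrable (fun w => (w - z)⁻¹ • h z) 0 s :=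
    (((continuousOn_id.sub continuousOn_const).inv₀ hnez_s).smul
      continuousOn_const).circleIntegrable hs0.le
  have houter : (∮ w in C(0, s), dslope h z w)
      = (∮ w in C(0, s), (w - z)⁻¹ • h w) - (2 * π * I : ℂ) • h z := by
    have e1 : (∮ w in C(0, s), dslope h z w)
        = ∮ w in C(0, s), ((w - z)⁻¹ • h w - (w - z)⁻¹ • h z) := by
      refine circleIntegral.integral_congr hs0.le fun w hw => ?_
      have hwz : w ≠ z := fun e => hnez_s w hw (by rw [e, sub_self])
      rw [dslope_of_ne h (Ne.symm hwz).symm, slope_def_field]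
      rw [div_eq_inv_mul]
      simp [smul_eq_mul, mul_sub]
    rw [e1, circleIntegral.integral_sub ci1 ci2, circleIntegral.integral_smul_const,
      circleIntegral.integral_sub_inv_of_mem_ball (by simpa [mem_ball_zero_iff] using hz2)]
  -- evaluate the integral over the inner circle
  have hnez_si : ∀ w ∈ sphere (0:ℂ) s⁻¹, w - z ≠ 0 := by
    intro w hw
    have : ‖w‖ = s⁻¹ := mem_sphere_zero_iff_norm.1 hw
    refine sub_ne_zero.2 fun e => ?_
    rw [e] at this; rw [this] at hz1; exact absurd hz1 (lt_irrefl _)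
  have hzero : (∮ w in C(0, s⁻¹), (w - z)⁻¹) = 0 := by
    refine Complex.circleIntegral_eq_zero_of_differentiable_on_off_countable hsi0.le
      Set.countable_empty (fun w hw => ?_) (fun w hw => ?_)
    · have hwz : w ≠ z := by
        intro e
        have := mem_closedBall_zero_iff.1 hw
        rw [e] at this; exact absurd (lt_of_lt_of_le hz1 this) (lt_irrefl _)
      exact (DifferentiableAt.continuousAt (𝕜 := ℂ)
        ((differentiableAt_id.sub_const z).inv (sub_ne_zero.2 hwz))).continuousWithinAt
    · have hwz : w ≠ z := by
        intro e
        have := (mem_closedBall_zero_iff.1 (ball_subset_closedBall hw.1))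
        rw [e] at this; exact absurd (lt_of_lt_of_le hz1 this) (lt_irrefl _)
      exact (differentiableAt_id.sub_const z).inv (sub_ne_zero.2 hwz)
  have hconthi : ContinuousOn h (sphere (0:ℂ) s⁻¹) := by
    intro w hw
    have hnw : ‖w‖ = s⁻¹ := mem_sphere_zero_iff_norm.1 hw
    exact ((hA w ⟨by rw [hnw]; exact hri,
      by rw [hnw]; exact lt_trans hsi1 hr⟩).continuousAt).continuousWithinAt
  have ci3 : CircleIntegrable (fun w => (w - z)⁻¹ • h w) 0 s⁻¹ :=
    (((continuousOn_id.sub continuousOn_const).inv₀ hnez_si).smul hconthi).circleIntegrable hsi0.le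
  have ci4 : CircleIntegrable (fun w => (w - z)⁻¹ • h z) 0 s⁻¹ :=
    (((continuousOn_id.sub continuousOn_const).inv₀ hnez_si).smul
      continuousOn_const).circleIntegrable hsi0.le
  have hinner : (∮ w in C(0, s⁻¹), dslope h z w) = ∮ w in C(0, s⁻¹), (w - z)⁻¹ • h w := by
    have e1 : (∮ w in C(0, s⁻¹), dslope h z w)
        = ∮ w in C(0, s⁻¹), ((w - z)⁻¹ • h w - (w - z)⁻¹ • h z) := by
      refine circleIntegral.integral_congr hsi0.le fun w hw => ?_
      have hwz : w ≠ z := fun e => hnez_si w hw (by rw [e, sub_self])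
      rw [dslope_of_ne h (Ne.symm hwz).symm, slope_def_field, div_eq_inv_mul]
      simp [smul_eq_mul, mul_sub]
    rw [e1, circleIntegral.integral_sub ci3 ci4, circleIntegral.integral_smul_const, hzero,
      zero_smul, sub_zero]
  -- Step B: inversion of the inner circle integral.
  have hstepB : (∮ w in C(0, s⁻¹), (w - z)⁻¹ • h w)
      = (∮ w in C(0, s), (w - z⁻¹)⁻¹ • h w) - ∮ w in C(0, s), w⁻¹ • h w := by
    have hB := circleIntegral_inv_subst s⁻¹ hsi0 (fun w => (w - z)⁻¹ • h w)
    rw [inv_inv] at hB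
    rw [hB]
    have hzinvlt : ‖z⁻¹‖ < s := by
      rw [norm_inv]
      calc ‖z‖⁻¹ < (s⁻¹)⁻¹ := inv_strictAnti₀ hsi0 hz1
        _ = s := inv_inv s
    have hnez2 : ∀ w ∈ sphere (0:ℂ) s, w - z⁻¹ ≠ 0 := by
      intro w hw
      have hnw : ‖w‖ = s := mem_sphere_zero_iff_norm.1 hw
      refine sub_ne_zero.2 fun e => ?_
      rw [e] at hnw; rw [hnw] at hzinvlt; exact absurd hzinvlt (lt_irrefl _)
    have hnez3 : ∀ w ∈ sphere (0:ℂ) s, w ≠ 0 := by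
      intro w hw e
      have hnw : ‖w‖ = s := mem_sphere_zero_iff_norm.1 hw
      rw [e, norm_zero] at hnw; exact absurd hnw.symm (ne_of_gt hs0)
    have ci5 : CircleIntegrable (fun w => (w - z⁻¹)⁻¹ • h w) 0 s :=
      (((continuousOn_id.sub continuousOn_const).inv₀ hnez2).smul hconth).circleIntegrable hs0.le
    have ci6 : CircleIntegrable (fun w => w⁻¹ • h w) 0 s :=
      ((continuousOn_id.inv₀ hnez3).smul hconth).circleIntegrable hs0.le
    rw [← circleIntegral.integral_sub ci5 ci6]
    refine circleIntegral.integral_congr hs0.le fun u hu => ?_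
    have hnu : ‖u‖ = s := mem_sphere_zero_iff_norm.1 hu
    have hu0 : u ≠ 0 := by intro e; rw [e, norm_zero] at hnu; exact absurd hnu.symm (ne_of_gt hs0)
    have hsymu : h u⁻¹ = -h u := hsym u ⟨by rw [hnu]; exact lt_trans hri (lt_trans hsi1 h1),
      by rw [hnu]; exact hsr⟩
    have hne1 : u⁻¹ - z ≠ 0 := by
      refine sub_ne_zero.2 fun e => ?_
      have : ‖u⁻¹‖ = s⁻¹ := by rw [norm_inv, hnu]
      rw [e] at this; rw [this] at hz1; exact absurd hz1 (lt_irrefl _)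
    have hne2 : u - z⁻¹ ≠ 0 := by
      refine sub_ne_zero.2 fun e => ?_
      rw [← e] at hzinvlt; rw [hnu] at hzinvlt; exact absurd hzinvlt (lt_irrefl _)
    have hz0' : (z:ℂ) ≠ 0 := hz0
    have hq : u * z - 1 ≠ 0 := by
      intro e
      apply hne2
      have huz : u * z = 1 := by linear_combination e
      rw [sub_eq_zero]
      exact eq_inv_of_mul_eq_one_left (by linear_combination huz)
    have hq2 : 1 - u * z ≠ 0 := fun e => hq (by linear_combination -e)
    simp only [smul_eq_mul, hsymu]
    have e1 : u⁻¹ - z = u⁻¹ * (1 - u * z) := by field_simp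
    have e2 : u - z⁻¹ = z⁻¹ * (u * z - 1) := by field_simp
    rw [e1, e2, mul_inv, mul_inv, inv_inv, inv_inv]
    field_simp
    ring
  rw [houter, hinner] at HI
  rw [hstepB] at HI
  linear_combination HI

/-- If `h` is analytic on the annulus `{1/r < |z| < r}` (with `r > 1`) and satisfies
`h(1/z) = -h(z)` there, then `h(z) = f(z) - f(1/z)` for some `f` analytic on the
ball `{|z| < r}` with `f(0) = 0`. -/
theorem annulus_odd_decomposition (r : ℝ) (hr : 1 < r) (h : ℂ → ℂ)
    (hA : AnalyticOnNhd ℂ h {z : ℂ | 1 / r < ‖z‖ ∧ ‖z‖ < r})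
    (hsym : ∀ z ∈ {z : ℂ | 1 / r < ‖z‖ ∧ ‖z‖ < r}, h z⁻¹ = -h z) :
    ∃ f : ℂ → ℂ, AnalyticOnNhd ℂ f (Metric.ball (0 : ℂ) r) ∧ f 0 = 0 ∧
      ∀ z ∈ {z : ℂ | 1 / r < ‖z‖ ∧ ‖z‖ < r}, h z = f z - f z⁻¹ := by
  have hr0 : (0:ℝ) < r := lt_trans one_pos hr
  have hrinv : 1/r < 1 := by rw [one_div]; exact inv_lt_one_of_one_lt₀ hr
  -- the truncated Cauchy integral formula with the constant term removed
  have hrep : ∀ {s : ℝ}, 1 < s → s < r → ∀ {z : ℂ}, s⁻¹ < ‖z‖ → ‖z‖ < s →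
      (∮ w in C(0, s), (w - z)⁻¹ • h w) - (∮ w in C(0, s), (w - z⁻¹)⁻¹ • h w)
        = (2 * π * I : ℂ) • h z := by
    intro s h1 hsr z hz1 hz2
    have hh1 : h 1 = 0 := by
      have := hsym 1 ⟨by simpa using hrinv, by simpa using hr⟩
      rw [inv_one] at this
      linear_combination this / 2
    have hm1 := master_formula r hr h hA hsym h1 hsr (z := 1)
      (by simpa using inv_lt_one_of_one_lt₀ h1) (by simpa using h1)
    rw [inv_one, hh1, smul_zero, sub_self, zero_add] at hm1
    have hmz := master_formula r hr h hA hsym h1 hsr hz1 hz2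
    rw [hm1, add_zero] at hmz
    exact hmz
  -- the candidate function
  set Cf : ℝ → ℂ → ℂ := fun s z => (2*π*I : ℂ)⁻¹ • ∮ w in C(0,s), (w - z)⁻¹ • h w with hCf
  set σ : ℂ → ℝ := fun z => (max ‖z‖ 1 + r)/2 with hσ
  have hσ1 : ∀ z : ℂ, 1 < σ z := fun z => by
    simp only [hσ]
    have : (1:ℝ) ≤ max ‖z‖ 1 := le_max_right _ _
    linarith
  have hσgt : ∀ z : ℂ, ‖z‖ < r → ‖z‖ < σ z := fun z hz => by
    simp only [hσ]
    have : ‖z‖ ≤ max ‖z‖ 1 := le_max_left _ _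
    linarith
  have hσr : ∀ z : ℂ, ‖z‖ < r → σ z < r := fun z hz => by
    simp only [hσ]
    have : max ‖z‖ 1 < r := max_lt hz hr
    linarith
  have hCeq : ∀ {z : ℂ} {s s' : ℝ}, 1 < s → 1 < s' → s < r → s' < r → ‖z‖ < s → ‖z‖ < s' →
      Cf s z = Cf s' z := by
    intro z s s' h1 h1' hsr hs'r hzs hzs'
    rcases le_total s s' with hle | hle
    · simp only [hCf]
      rw [cauchy_radius_indep r hr h hA h1 hzs hle hs'r]
    · simp only [hCf]
      rw [cauchy_radius_indep r hr h hA h1' hzs' hle hsr]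
  refine ⟨fun z => Cf (σ z) z - Cf (σ 0) 0, ?_, by simp, ?_⟩
  · -- analyticity
    intro z₀ hz₀
    have hz₀r : ‖z₀‖ < r := mem_ball_zero_iff.1 hz₀
    have ht1 : 1 < σ z₀ := hσ1 z₀
    have htz : ‖z₀‖ < σ z₀ := hσgt z₀ hz₀r
    have htr : σ z₀ < r := hσr z₀ hz₀r
    have ht0 : (0:ℝ) < σ z₀ := lt_trans one_pos ht1
    have hci : CircleIntegrable h 0 (σ z₀) := by
      refine ContinuousOn.circleIntegrable ht0.le fun w hw => ?_
      have hnw : ‖w‖ = σ z₀ := mem_sphere_zero_iff_norm.1 hw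
      exact ((hA w ⟨by rw [hnw]; exact lt_trans hrinv ht1, by rw [hnw]; exact htr⟩
        ).continuousAt).continuousWithinAt
    have hball := (hasFPowerSeriesOn_cauchy_integral (f := h) (c := 0)
      (R := Real.toNNReal (σ z₀)) (by rwa [Real.coe_toNNReal _ ht0.le])
      (Real.toNNReal_pos.2 ht0)).analyticOnNhd
    have hAt : AnalyticAt ℂ
        (fun w => (2*π*I:ℂ)⁻¹ • ∮ u in C(0, (Real.toNNReal (σ z₀) : ℝ)), (u - w)⁻¹ • h u) z₀ := by
      refine hball z₀ ?_
      rw [Metric.emetric_ball_nnreal]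
      exact mem_ball_zero_iff.2 (by rw [Real.coe_toNNReal _ ht0.le]; exact htz)
    rw [Real.coe_toNNReal _ ht0.le] at hAt
    refine (hAt.sub (analyticAt_const (v := Cf (σ 0) 0))).congr ?_
    have hmem : Metric.ball z₀ (σ z₀ - ‖z₀‖) ∈ nhds z₀ := Metric.ball_mem_nhds z₀ (by linarith)
    filter_upwards [hmem] with z hz
    have hzt : ‖z‖ < σ z₀ := by
      have h1 := mem_ball_iff_norm.1 hz
      calc ‖z‖ = ‖z₀ + (z - z₀)‖ := by ring_nf
        _ ≤ ‖z₀‖ + ‖z - z₀‖ := norm_add_le _ _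
        _ < σ z₀ := by linarith
    have hzr : ‖z‖ < r := lt_trans hzt htr
    show Cf (σ z₀) z - Cf (σ 0) 0 = Cf (σ z) z - Cf (σ 0) 0
    rw [hCeq ht1 (hσ1 z) htr (hσr z hzr) hzt (hσgt z hzr)]
  · -- the identity on the annulus
    intro z hz
    obtain ⟨hz1, hz2⟩ := hz
    have hz0 : z ≠ 0 := by
      intro e; rw [e, norm_zero] at hz1
      exact absurd hz1 (not_lt.2 (by positivity))
    have hzpos : 0 < ‖z‖ := lt_trans (by positivity) hz1
    have hzir : ‖z⁻¹‖ < r := by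
      rw [norm_inv]
      rw [one_div] at hz1
      calc ‖z‖⁻¹ < (r⁻¹)⁻¹ := inv_strictAnti₀ (by positivity) hz1
        _ = r := inv_inv r
    set s := (max ‖z‖ (max ‖z⁻¹‖ 1) + r)/2 with hs
    have h1s : 1 < s := by
      have hmax : (1:ℝ) ≤ max ‖z‖ (max ‖z⁻¹‖ 1) := le_max_of_le_right (le_max_right _ _)
      simp only [hs]; linarith
    have hsr : s < r := by
      have : max ‖z‖ (max ‖z⁻¹‖ 1) < r := max_lt hz2 (max_lt hzir hr)
      simp only [hs]; linarith
    have hzs : ‖z‖ < s := by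
      have : ‖z‖ ≤ max ‖z‖ (max ‖z⁻¹‖ 1) := le_max_left _ _
      simp only [hs]; linarith
    have hzis : ‖z⁻¹‖ < s := by
      have : ‖z⁻¹‖ ≤ max ‖z‖ (max ‖z⁻¹‖ 1) := le_max_of_le_right (le_max_left _ _)
      simp only [hs]; linarith
    have hsz1 : s⁻¹ < ‖z‖ := by
      have h' : ‖z‖⁻¹ < s := by rwa [norm_inv] at hzis
      calc s⁻¹ < (‖z‖⁻¹)⁻¹ := inv_strictAnti₀ (by positivity) h'
        _ = ‖z‖ := inv_inv _
    have hrepz := hrep h1s hsr hsz1 hzs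
    show h z = (Cf (σ z) z - Cf (σ 0) 0) - (Cf (σ z⁻¹) z⁻¹ - Cf (σ 0) 0)
    have e : (Cf (σ z) z - Cf (σ 0) 0) - (Cf (σ z⁻¹) z⁻¹ - Cf (σ 0) 0)
        = Cf s z - Cf s z⁻¹ := by
      rw [hCeq (hσ1 z) h1s (hσr z hz2) hsr (hσgt z hz2) hzs,
          hCeq (hσ1 z⁻¹) h1s (hσr z⁻¹ hzir) hsr (hσgt z⁻¹ hzir) hzis]
      ring
    rw [e]
    simp only [hCf]
    rw [← smul_sub, hrepz, smul_smul, inv_mul_cancel₀ Complex.two_pi_I_ne_zero, one_smul]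
end

section
/- Let S ⊆ ℝ⁴ be a set invariant under every linear isometry of ℝ⁴ that fixes the first coordinate (i.e., every map (x₁, x') ↦ (x₁, T x') with T an orthogonal transformation of ℝ³ acting on x' = (x₂,x₃,x₄)). Suppose p ∈ ℝ[X₁,X₂,X₃,X₄] is a nonzero polynomial vanishing at every point of S. Then there exists a nonzero polynomial q ∈ ℝ[X,Y] such that q(x₁, ‖x'‖) = 0 for every point (x₁, x') ∈ S. In other words, if an axially symmetric set in ℝ⁴ is algebraic, then its two-dimensional profile {(x₁, ‖x'‖) : (x₁,x') ∈ S} is algebraic. -/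
open MvPolynomial
set_option maxHeartbeats 1000000

private lemma exists_orth (a b : EuclideanSpace ℝ (Fin 3)) (h : ‖a‖ = ‖b‖) :
    ∃ T : Matrix (Fin 3) (Fin 3) ℝ, T ∈ Matrix.orthogonalGroup (Fin 3) ℝ ∧
      T.mulVec a = b := by
  set f := Submodule.reflection (ℝ ∙ (a - b))ᗮ with hf
  have hfa : f a = b := Submodule.reflection_sub h
  let g : (Fin 3 → ℝ) →ₗ[ℝ] (Fin 3 → ℝ) := (WithLp.linearEquiv 2 ℝ (Fin 3 → ℝ)).toLinearMap ∘ₗ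
    f.toLinearEquiv.toLinearMap ∘ₗ (WithLp.linearEquiv 2 ℝ (Fin 3 → ℝ)).symm.toLinearMap
  refine ⟨LinearMap.toMatrix' g, ?_, ?_⟩
  · rw [Matrix.mem_orthogonalGroup_iff']
    ext i j
    have key := f.inner_map_map (WithLp.toLp 2 (Pi.single i 1 : Fin 3 → ℝ) : EuclideanSpace ℝ (Fin 3))
      (WithLp.toLp 2 (Pi.single j 1 : Fin 3 → ℝ) : EuclideanSpace ℝ (Fin 3))
    simp only [PiLp.inner_apply, RCLike.inner_apply, conj_trivial] at key
    simp only [Matrix.mul_apply, Matrix.star_apply, star_trivial,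
      LinearMap.toMatrix'_apply, Matrix.one_apply, Matrix.transpose_apply]
    have hsing : ∀ m : Fin 3, (fun j' => if j' = m then (1:ℝ) else 0) = Pi.single m 1 := by
      intro m; funext k; simp [Pi.single_apply]
    calc ∑ k, g (Pi.single i 1) k * g (Pi.single j 1) k
        = ∑ k, (Pi.single i 1 : Fin 3 → ℝ) k * (Pi.single j 1 : Fin 3 → ℝ) k :=
          (Finset.sum_congr rfl fun k _ => mul_comm _ _).trans
            (key.trans (Finset.sum_congr rfl fun k _ => mul_comm _ _))
      _ = if i = j then 1 else 0 := by
          simp [Pi.single_apply, Finset.sum_ite_eq', eq_comm]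
  · have h1 : Matrix.toLin' (LinearMap.toMatrix' g) = g := Matrix.toLin'_toMatrix' g
    calc (LinearMap.toMatrix' g).mulVec a
        = Matrix.toLin' (LinearMap.toMatrix' g) a := (Matrix.toLin'_apply _ _).symm
      _ = g a := by rw [h1]
      _ = b := congrArg WithLp.ofLp hfa

/-- If a set `S ⊆ ℝ⁴` is invariant under all orthogonal transformations acting on
the last three coordinates and is contained in the zero set of a nonzero real
polynomial in four variables, then its two-dimensional profile
`{(x₁, ‖(x₂,x₃,x₄)‖) : x ∈ S}` is contained in the zero set of a nonzero real
polynomial in two variables. -/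
theorem axially_symmetric_algebraic_profile (S : Set (Fin 4 → ℝ))
    (hsym : ∀ T : Matrix (Fin 3) (Fin 3) ℝ, T ∈ Matrix.orthogonalGroup (Fin 3) ℝ →
      ∀ x ∈ S, Fin.cons (x 0) (T.mulVec fun j => x j.succ) ∈ S)
    (p : MvPolynomial (Fin 4) ℝ) (hp : p ≠ 0)
    (hpS : ∀ x ∈ S, MvPolynomial.eval x p = 0) :
    ∃ q : MvPolynomial (Fin 2) ℝ, q ≠ 0 ∧
      ∀ x ∈ S,
        MvPolynomial.eval ![x 0, Real.sqrt (∑ j : Fin 3, x j.succ ^ 2)] q = 0 := by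
  classical
  -- Step 1: p vanishes on every "rotated" point of S.
  have hA : ∀ x ∈ S, ∀ y : Fin 3 → ℝ,
      (∑ j : Fin 3, y j ^ 2) = (∑ j : Fin 3, x j.succ ^ 2) →
      MvPolynomial.eval (Fin.cons (x 0) y) p = 0 := by
    intro x hx y hy
    set a : EuclideanSpace ℝ (Fin 3) := WithLp.toLp 2 (fun j => x j.succ) with ha
    set b : EuclideanSpace ℝ (Fin 3) := WithLp.toLp 2 y with hb
    have hn : ‖a‖ = ‖b‖ := by
      rw [EuclideanSpace.norm_eq, EuclideanSpace.norm_eq]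
      simp only [Real.norm_eq_abs, sq_abs, ha, hb]
      rw [hy]
    obtain ⟨T, hT, hTa⟩ := exists_orth a b hn
    have hmem := hsym T hT x hx
    have h2 : (T.mulVec fun j => x j.succ) = y := hTa
    rw [h2] at hmem
    exact hpS _ hmem
  -- Step 2: find a unit vector v and radius r witnessing nonvanishing of p.
  obtain ⟨z, hz⟩ : ∃ z : Fin 4 → ℝ, MvPolynomial.eval z p ≠ 0 := by
    by_contra h
    push_neg at h
    exact hp (MvPolynomial.funext fun x => by simp [h x])
  obtain ⟨v, r, hv1, hvr⟩ : ∃ (v : Fin 3 → ℝ) (r : ℝ),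
      (∑ j : Fin 3, v j ^ 2) = 1 ∧ (fun j => v j * r) = fun j => z j.succ := by
    by_cases hy : (fun j => z j.succ) = (0 : Fin 3 → ℝ)
    · refine ⟨Pi.single 0 1, 0, ?_, ?_⟩
      · simp [Pi.single_apply, Fin.sum_univ_three]
      · funext j
        simpa using (congrFun hy j).symm
    · have hpos : 0 < ∑ j : Fin 3, z j.succ ^ 2 := by
        rcases Function.ne_iff.1 hy with ⟨j, hj⟩
        exact Finset.sum_pos' (fun k _ => sq_nonneg _)
          ⟨j, Finset.mem_univ j, pow_pos (abs_pos.2 hj) 2 |>.trans_eq (sq_abs _) |>.trans_le le_rfl⟩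
      set s := Real.sqrt (∑ j : Fin 3, z j.succ ^ 2) with hs
      have hs0 : 0 < s := Real.sqrt_pos.2 hpos
      have hss : s ^ 2 = ∑ j : Fin 3, z j.succ ^ 2 := Real.sq_sqrt hpos.le
      refine ⟨fun j => z j.succ / s, s, ?_, ?_⟩
      · have : ∑ j : Fin 3, (z j.succ / s) ^ 2 = (∑ j : Fin 3, z j.succ ^ 2) / s ^ 2 := by
          rw [Finset.sum_div]
          exact Finset.sum_congr rfl fun j _ => div_pow _ _ _
        rw [this, ← hss, div_self (pow_ne_zero _ hs0.ne')]
      · funext j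
        field_simp
  -- Step 3: the polynomial q.
  set f : Fin 4 → MvPolynomial (Fin 2) ℝ :=
    Fin.cons (MvPolynomial.X 0) (fun j => MvPolynomial.C (v j) * MvPolynomial.X 1) with hfdef
  set q : MvPolynomial (Fin 2) ℝ := MvPolynomial.bind₁ f p with hq
  have heval : ∀ t u : ℝ,
      MvPolynomial.eval ![t, u] q = MvPolynomial.eval (Fin.cons t (fun j => v j * u)) p := by
    intro t u
    have h1 : MvPolynomial.eval ![t, u] q = MvPolynomial.aeval ![t, u] q := by
      rw [← MvPolynomial.coe_aeval_eq_eval]; rfl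
    rw [h1, hq, MvPolynomial.aeval_bind₁]
    have h2 : (fun i => MvPolynomial.aeval ![t, u] (f i))
        = Fin.cons t (fun j => v j * u) := by
      funext i
      refine Fin.cases ?_ (fun j => ?_) i <;> simp [hfdef]
    rw [h2]
    rw [← MvPolynomial.coe_aeval_eq_eval]; rfl
  refine ⟨q, ?_, ?_⟩
  · intro h0
    apply hz
    have := heval (z 0) r
    rw [h0] at this
    simp only [map_zero] at this
    rw [hvr] at this
    rw [show Fin.cons (z 0) (fun j => z j.succ) = z from Fin.cons_self_tail z] at this
    exact this.symm
  · intro x hx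
    rw [heval]
    apply hA x hx
    have hnn : (0:ℝ) ≤ ∑ j : Fin 3, x j.succ ^ 2 :=
      Finset.sum_nonneg fun _ _ => sq_nonneg _
    have : ∑ j : Fin 3, (v j * Real.sqrt (∑ j : Fin 3, x j.succ ^ 2)) ^ 2
        = (∑ j : Fin 3, v j ^ 2) * (Real.sqrt (∑ j : Fin 3, x j.succ ^ 2)) ^ 2 := by
      rw [Finset.sum_mul]
      exact Finset.sum_congr rfl fun j _ => mul_pow _ _ _
    rw [this, hv1, one_mul, Real.sq_sqrt hnn]
end
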